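/- Let (V, ω) be a 2m-dimensional symplectic vector space and θ another symplectic form on V such that A := (ω♭)^{-1}θ♭ satisfies A² = id and A is split. Set Q(u + σ) = −(θ♭)^{-1}σ + θ♭u on E = V ⊕ V*. Then β_Q(x, y) := b(I₋Qx, y) is symmetric and split, i.e., has signature (2m, 2m). -/

import Mathlib

/-!
Writing `x = (u, σ)`, `y = (v, τ)`, the identities `(ω♭)⁻¹θ♭ = A` and `ω((θ♭)⁻¹σ, v) = σ(Av)`
(skew-symmetry of `ω` and `θ` together with `A² = id`) turn `β_Q` into
`-(τ(Au) + σ(Av))`, the negative of the canonical pairing of `V ⊕ V*` twisted by the invertible `A`.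
For any inner product `g` on `V`, the twisted pairing is positive definite on the graph of `g ∘ A`
and negative definite on the graph of `-g ∘ A`; both graphs have dimension `dim V = 2m`, half of
`dim E`, which forces the signature `(2m, 2m)`.
-/

/-- A real bilinear form `β` on `E` has signature `(p, q)`. -/
def HasSignature {E : Type*} [AddCommGroup E] [Module ℝ E]
    (β : E → E → ℝ) (p q : ℕ) : Prop :=
  ((∃ P : Submodule ℝ E, Module.finrank ℝ P = p ∧ ∀ x ∈ P, x ≠ 0 → 0 < β x x) ∧
    ∀ P : Submodule ℝ E, (∀ x ∈ P, x ≠ 0 → 0 < β x x) → Module.finrank ℝ P ≤ p) ∧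
  ((∃ N : Submodule ℝ E, Module.finrank ℝ N = q ∧ ∀ x ∈ N, x ≠ 0 → β x x < 0) ∧
    ∀ N : Submodule ℝ E, (∀ x ∈ N, x ≠ 0 → β x x < 0) → Module.finrank ℝ N ≤ q)

open Module

theorem Module.Basis.toDual_self_pos {K V ι : Type*} [Field K] [LinearOrder K]
    [IsStrictOrderedRing K] [AddCommGroup V] [Module K V] [Fintype ι] [DecidableEq ι]
    (e : Basis ι K V) {w : V} (hw : w ≠ 0) : 0 < e.toDual w w := by
  have hsum : e.toDual w w = ∑ i, e.repr w i * e.repr w i := by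
    nth_rewrite 1 [← e.sum_repr w]
    simp only [map_sum, map_smul, LinearMap.sum_apply, LinearMap.smul_apply, e.toDual_apply_right,
      smul_eq_mul]
  obtain ⟨i, hi⟩ : ∃ i, e.repr w i ≠ 0 := by
    by_contra! h
    exact hw (e.repr.map_eq_zero_iff.mp (Finsupp.ext h))
  rw [hsum]
  exact Finset.sum_pos' (fun j _ => mul_self_nonneg _) ⟨i, Finset.mem_univ i, mul_self_pos.mpr hi⟩

theorem LinearMap.finrank_graph {K M N : Type*} [DivisionRing K] [AddCommGroup M] [Module K M]
    [AddCommGroup N] [Module K N] (f : M →ₗ[K] N) : finrank K f.graph = finrank K M := by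
  rw [graph_eq_range_prod]
  exact finrank_range_of_inj fun x y h => congrArg Prod.fst h

section Signature

variable {E : Type*} [AddCommGroup E] [Module ℝ E] {β : E → E → ℝ}

theorem HasSignature.neg {p q : ℕ} (h : HasSignature β p q) :
    HasSignature (fun x y => -β x y) q p := by
  simp only [HasSignature, neg_pos, neg_lt_zero] at h ⊢
  exact ⟨h.2, h.1⟩

theorem disjoint_of_posDef_of_negDef {P N : Submodule ℝ E}
    (hP : ∀ x ∈ P, x ≠ 0 → 0 < β x x) (hN : ∀ x ∈ N, x ≠ 0 → β x x < 0) : Disjoint P N := by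
  rw [Submodule.disjoint_def]
  intro x hxP hxN
  by_contra hx
  exact (hP x hxP hx).asymm (hN x hxN hx)

/-- Any definite subspace meets the given one of opposite sign trivially. -/
theorem hasSignature_of_finrank_add_eq [FiniteDimensional ℝ E] {P N : Submodule ℝ E}
    (hP : ∀ x ∈ P, x ≠ 0 → 0 < β x x) (hN : ∀ x ∈ N, x ≠ 0 → β x x < 0)
    (hdim : finrank ℝ P + finrank ℝ N = finrank ℝ E) :
    HasSignature β (finrank ℝ P) (finrank ℝ N) := by
  refine ⟨⟨⟨P, rfl, hP⟩, fun P' hP' => ?_⟩, ⟨⟨N, rfl, hN⟩, fun N' hN' => ?_⟩⟩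
  · have := Submodule.finrank_add_finrank_le_of_disjoint (disjoint_of_posDef_of_negDef hP' hN)
    omega
  · have := Submodule.finrank_add_finrank_le_of_disjoint (disjoint_of_posDef_of_negDef hP hN')
    omega

end Signature

section TwistedPairing

variable {V : Type*} [AddCommGroup V] [Module ℝ V]

def twistedPairing (A : V →ₗ[ℝ] V) (x y : V × Dual ℝ V) : ℝ := y.2 (A x.1) + x.2 (A y.1)

theorem twistedPairing_comm (A : V →ₗ[ℝ] V) (x y : V × Dual ℝ V) :
    twistedPairing A x y = twistedPairing A y x :=
  add_comm _ _

theorem twistedPairing_self_of_mem_graph (A : V →ₗ[ℝ] V) {f : V →ₗ[ℝ] Dual ℝ V}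
    {x : V × Dual ℝ V} (hx : x ∈ f.graph) : twistedPairing A x x = 2 * f x.1 (A x.1) := by
  rw [LinearMap.mem_graph_iff] at hx
  rw [twistedPairing, hx]
  ring

theorem LinearMap.fst_ne_zero_of_mem_graph {R M N : Type*} [Semiring R] [AddCommMonoid M]
    [Module R M] [AddCommMonoid N] [Module R N] {f : M →ₗ[R] N} {x : M × N} (hx : x ∈ f.graph) (hx0 : x ≠ 0) : x.1 ≠ 0 := by
  rw [LinearMap.mem_graph_iff] at hx
  intro h
  exact hx0 (Prod.ext h (by rw [hx, h, map_zero]; rfl))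

theorem hasSignature_twistedPairing [FiniteDimensional ℝ V] {A : V →ₗ[ℝ] V}
    (hA : Function.Injective A) :
    HasSignature (twistedPairing A) (finrank ℝ V) (finrank ℝ V) := by
  set g := (finBasis ℝ V).toDual ∘ₗ A
  have hpos : ∀ u ≠ 0, 0 < g u (A u) := fun u hu =>
    (finBasis ℝ V).toDual_self_pos ((map_ne_zero_iff A hA).mpr hu)
  have hgraph := hasSignature_of_finrank_add_eq (β := twistedPairing A) (P := g.graph)
    (N := (-g).graph)
    (fun x hx hx0 => by
      rw [twistedPairing_self_of_mem_graph A hx]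
      linarith [hpos _ (LinearMap.fst_ne_zero_of_mem_graph hx hx0)])
    (fun x hx hx0 => by
      rw [twistedPairing_self_of_mem_graph A hx, LinearMap.neg_apply, LinearMap.neg_apply]
      linarith [hpos _ (LinearMap.fst_ne_zero_of_mem_graph hx hx0)])
    (by rw [LinearMap.finrank_graph, LinearMap.finrank_graph, finrank_prod,
      Subspace.dual_finrank_eq])
  rwa [LinearMap.finrank_graph, LinearMap.finrank_graph] at hgraph

end TwistedPairing

theorem stmt17_general (V : Type*) [AddCommGroup V] [Module ℝ V] [FiniteDimensional ℝ V]
    (m : ℕ) (hdim : Module.finrank ℝ V = 2 * m)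
    (ωb θb : V →ₗ[ℝ] Module.Dual ℝ V)
    (hωskew : ∀ u v, ωb u v = - ωb v u)
    (hθskew : ∀ u v, θb u v = - θb v u)
    (p : Module.Dual ℝ V →ₗ[ℝ] V)
    (hp2 : ∀ u, p (ωb u) = u)
    (pθ : Module.Dual ℝ V →ₗ[ℝ] V)
    (hpθ1 : ∀ σ, θb (pθ σ) = σ)
    (A : Module.End ℝ V)
    (hA : ∀ v, ωb (A v) = θb v)
    (hA2 : ∀ v, A (A v) = v)
    (b : (V × Module.Dual ℝ V) → (V × Module.Dual ℝ V) → ℝ)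
    (hb : ∀ x y, b x y = y.2 x.1 + x.2 y.1)
    (I : (V × Module.Dual ℝ V) → (V × Module.Dual ℝ V))
    (hI : ∀ x, I x = (-(p x.2), ωb x.1))
    (Q : (V × Module.Dual ℝ V) → (V × Module.Dual ℝ V))
    (hQ : ∀ x, Q x = (-(pθ x.2), θb x.1))
    (β : (V × Module.Dual ℝ V) → (V × Module.Dual ℝ V) → ℝ)
    (hβ : ∀ x y, β x y = b (I (Q x)) y) :
    (∀ x y, β x y = β y x) ∧ HasSignature β (2 * m) (2 * m) := by
  have hp_θb : ∀ u, p (θb u) = A u := fun u => by rw [← hA, hp2]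
  have hωb_pθ : ∀ σ v, ωb (pθ σ) v = σ (A v) := fun σ v => by
    rw [hωskew, ← hA2 v, hA, hA2, hθskew, hpθ1, neg_neg]
  have hβ_eq : β = fun x y => -twistedPairing A x y := by
    funext x y
    simp only [hβ, hb, hI, hQ, map_neg, LinearMap.neg_apply, hp_θb, hωb_pθ, twistedPairing]
    ring
  rw [hβ_eq, ← hdim]
  exact ⟨fun x y => congrArg Neg.neg (twistedPairing_comm A x y),
    (hasSignature_twistedPairing (Function.Involutive.injective hA2)).neg⟩

/-- if `θ` is a second symplectic form on `(V, ω)` such that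
`A = (ω♭)⁻¹θ♭` satisfies `A² = id` and is split, then for
`Q(u+σ) = -(θ♭)⁻¹σ + θ♭u`, the form `β_Q(x,y) = b(I₋Qx, y)` is symmetric and
split, of signature `(2m, 2m)`. -/
theorem stmt17 (V : Type*) [AddCommGroup V] [Module ℝ V] [FiniteDimensional ℝ V]
    (m : ℕ) (hdim : Module.finrank ℝ V = 2 * m)
    (ωb θb : V →ₗ[ℝ] Module.Dual ℝ V)
    (hωskew : ∀ u v, ωb u v = - ωb v u)
    (hθskew : ∀ u v, θb u v = - θb v u)
    (p : Module.Dual ℝ V →ₗ[ℝ] V)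
    (hp1 : ∀ σ, ωb (p σ) = σ) (hp2 : ∀ u, p (ωb u) = u)
    (pθ : Module.Dual ℝ V →ₗ[ℝ] V)
    (hpθ1 : ∀ σ, θb (pθ σ) = σ) (hpθ2 : ∀ u, pθ (θb u) = u)
    (A : Module.End ℝ V)
    (hA : ∀ v, ωb (A v) = θb v)
    (hA2 : ∀ v, A (A v) = v)
    (hAsplit : Module.finrank ℝ (A.eigenspace 1) = Module.finrank ℝ (A.eigenspace (-1)))
    (b : (V × Module.Dual ℝ V) → (V × Module.Dual ℝ V) → ℝ)
    (hb : ∀ x y, b x y = y.2 x.1 + x.2 y.1)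
    (I : (V × Module.Dual ℝ V) → (V × Module.Dual ℝ V))
    (hI : ∀ x, I x = (-(p x.2), ωb x.1))
    (Q : (V × Module.Dual ℝ V) → (V × Module.Dual ℝ V))
    (hQ : ∀ x, Q x = (-(pθ x.2), θb x.1))
    (β : (V × Module.Dual ℝ V) → (V × Module.Dual ℝ V) → ℝ)
    (hβ : ∀ x y, β x y = b (I (Q x)) y) :
    (∀ x y, β x y = β y x) ∧ HasSignature β (2 * m) (2 * m) :=
  stmt17_general V m hdim ωb θb hωskew hθskew p hp2 pθ hpθ1 A hA hA2 b hb I hI Q hQ β hβ
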